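/- arXiv:1906.04178 — 3 statements merged into one kernel-verified Lean document; each statement's English description precedes it below -/
import Mathlib

section
/- Let n ≥ 1, let H, H' : ℝ → Matrix (Fin n) (Fin n) ℂ be continuous, and let U, U' : ℝ → Matrix (Fin n) (Fin n) ℂ be differentiable maps satisfying the Schrödinger equations dU/dt = −i·H(t)·U(t) and dU'/dt = −i·H'(t)·U'(t) for all t, with U(0) = U'(0) = 1. Assume moreover that U(t) is unitary (U(t)† U(t) = 1) for every t. Then for every vector ψ ∈ ℂⁿ and every t ≥ 0, ‖U(t)ψ − U'(t)ψ‖ ≤ ∫₀ᵗ ‖(H(τ) − H'(τ))·(U'(τ)ψ)‖ dτ, where ‖·‖ is the Euclidean norm on ℂⁿ and matrices act by matrix-vector multiplication. -/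
open Matrix
open scoped InnerProductSpace
attribute [local instance] Matrix.normedAddCommGroup Matrix.normedSpace

/-- Action of a matrix on the Euclidean space `ℂⁿ` by matrix-vector multiplication. -/
noncomputable def matVec {n : ℕ} (M : Matrix (Fin n) (Fin n) ℂ)
    (ψ : EuclideanSpace ℂ (Fin n)) : EuclideanSpace ℂ (Fin n) :=
  Matrix.toEuclideanLin M ψ

variable {n : ℕ}

lemma matVec_def (M : Matrix (Fin n) (Fin n) ℂ) (x : EuclideanSpace ℂ (Fin n)) :
    matVec M x = M.mulVec x := rfl

lemma matVec_mul (A B : Matrix (Fin n) (Fin n) ℂ) (x : EuclideanSpace ℂ (Fin n)) :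
    matVec (A * B) x = matVec A (matVec B x) := by
  ext i; simp [matVec, Matrix.mulVec_mulVec]

lemma matVec_one (x : EuclideanSpace ℂ (Fin n)) : matVec 1 x = x := by
  ext i; simp [matVec]

-- ℝ-linear CLM  M ↦ (x ↦ matVec M x)
noncomputable def matS (n : ℕ) : Matrix (Fin n) (Fin n) ℂ →L[ℝ]
    (EuclideanSpace ℂ (Fin n) →L[ℝ] EuclideanSpace ℂ (Fin n)) :=
  LinearMap.toContinuousLinearMap
  { toFun := fun M => LinearMap.toContinuousLinearMap
      ((Matrix.toEuclideanLin M).restrictScalars ℝ)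
    map_add' := by intro A B; ext x; simp [Matrix.toEuclideanLin_apply, Matrix.add_mulVec]
    map_smul' := by intro r M; ext x; simp [Matrix.toEuclideanLin_apply, Matrix.smul_mulVec] }

lemma matS_apply (M : Matrix (Fin n) (Fin n) ℂ) (x : EuclideanSpace ℂ (Fin n)) :
    matS n M x = matVec M x := rfl

noncomputable def matC (n : ℕ) : Matrix (Fin n) (Fin n) ℂ →L[ℝ] Matrix (Fin n) (Fin n) ℂ :=
  LinearMap.toContinuousLinearMap
  { toFun := fun M => Mᴴ
    map_add' := by intro A B; simp
    map_smul' := by intro r M; ext i j; simp }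

lemma matVec_conjTranspose_eq_adjoint (A : Matrix (Fin n) (Fin n) ℂ)
    (x : EuclideanSpace ℂ (Fin n)) :
    matVec Aᴴ x = LinearMap.adjoint (Matrix.toEuclideanLin A) x := by
  rw [matVec, Matrix.toEuclideanLin_conjTranspose_eq_adjoint]

lemma norm_matVec_of_unitary {A : Matrix (Fin n) (Fin n) ℂ} (h : Aᴴ * A = 1)
    (x : EuclideanSpace ℂ (Fin n)) : ‖matVec A x‖ = ‖x‖ := by
  have h2 : (⟪matVec A x, matVec A x⟫_ℂ : ℂ) = ⟪x, x⟫_ℂ := by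
    have h1 := LinearMap.adjoint_inner_right (𝕜 := ℂ) (Matrix.toEuclideanLin A) x (matVec A x)
    have hx : LinearMap.adjoint (Matrix.toEuclideanLin A) (matVec A x) = x := by
      rw [← matVec_conjTranspose_eq_adjoint, ← matVec_mul, h, matVec_one]
    rw [hx] at h1
    exact h1.symm
  rw [inner_self_eq_norm_sq_to_K, inner_self_eq_norm_sq_to_K] at h2
  have h3 : (‖matVec A x‖ : ℝ) ^ 2 = ‖x‖ ^ 2 := by exact_mod_cast h2
  nlinarith [norm_nonneg (matVec A x), norm_nonneg x]

lemma hasDerivAt_matS {F : ℝ → Matrix (Fin n) (Fin n) ℂ} {F' : Matrix (Fin n) (Fin n) ℂ}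
    {τ : ℝ} (hF : HasDerivAt F F' τ) :
    HasDerivAt (fun s => matS n (F s)) (matS n F') τ :=
  ((matS n).hasFDerivAt.comp_hasDerivAt τ hF)

lemma hasDerivAt_conjT {F : ℝ → Matrix (Fin n) (Fin n) ℂ} {F' : Matrix (Fin n) (Fin n) ℂ}
    {τ : ℝ} (hF : HasDerivAt F F' τ) :
    HasDerivAt (fun s => (F s)ᴴ) (F'ᴴ) τ :=
  ((matC n).hasFDerivAt.comp_hasDerivAt τ hF)

lemma matVec_smulM (c : ℂ) (M : Matrix (Fin n) (Fin n) ℂ) (x : EuclideanSpace ℂ (Fin n)) :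
    matVec (c • M) x = c • matVec M x := by
  simp [matVec, _root_.map_smul]

lemma matVec_smulV (M : Matrix (Fin n) (Fin n) ℂ) (c : ℂ) (x : EuclideanSpace ℂ (Fin n)) :
    matVec M (c • x) = c • matVec M x := by
  simp [matVec]

lemma matVec_subV (M : Matrix (Fin n) (Fin n) ℂ) (x y : EuclideanSpace ℂ (Fin n)) :
    matVec M (x - y) = matVec M x - matVec M y := by
  simp [matVec]

lemma matVec_subM (A B : Matrix (Fin n) (Fin n) ℂ) (x : EuclideanSpace ℂ (Fin n)) :
    matVec (A - B) x = matVec A x - matVec B x := by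
  simp [matVec]

lemma hasDerivAt_matVec {F : ℝ → Matrix (Fin n) (Fin n) ℂ} {F' : Matrix (Fin n) (Fin n) ℂ}
    {τ : ℝ} (hF : HasDerivAt F F' τ) (x : EuclideanSpace ℂ (Fin n)) :
    HasDerivAt (fun s => matVec (F s) x) (matVec F' x) τ :=
  (((matS n).flip x).hasFDerivAt.comp_hasDerivAt τ hF)

lemma hermitian_vec {H U : ℝ → Matrix (Fin n) (Fin n) ℂ}
    (hU : ∀ t, HasDerivAt U ((-Complex.I) • (H t * U t)) t)
    (hunit : ∀ t, (U t)ᴴ * U t = 1) (τ : ℝ) (y : EuclideanSpace ℂ (Fin n)) :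
    matVec (H τ)ᴴ y = matVec (H τ) y := by
  have hUU' : U τ * (U τ)ᴴ = 1 := mul_eq_one_comm.mp (hunit τ)
  set x := matVec (U τ)ᴴ y with hxdef
  have hy : matVec (U τ) x = y := by rw [hxdef, ← matVec_mul, hUU', matVec_one]
  have hk1 : HasDerivAt (fun s => (matS n ((U s)ᴴ)) (matVec (U s) x))
      ((matS n (((-Complex.I) • (H τ * U τ))ᴴ)) (matVec (U τ) x)
        + (matS n ((U τ)ᴴ)) (matVec ((-Complex.I) • (H τ * U τ)) x)) τ :=
    HasDerivAt.clm_apply (hasDerivAt_matS (hasDerivAt_conjT (hU τ)))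
      (hasDerivAt_matVec (hU τ) x)
  have hconst : (fun s => (matS n ((U s)ᴴ)) (matVec (U s) x)) = fun _ => x := by
    funext s
    rw [matS_apply, ← matVec_mul, hunit s, matVec_one]
  rw [hconst] at hk1
  have hD : (matS n (((-Complex.I) • (H τ * U τ))ᴴ)) (matVec (U τ) x)
        + (matS n ((U τ)ᴴ)) (matVec ((-Complex.I) • (H τ * U τ)) x) = 0 :=
    hk1.unique (hasDerivAt_const τ x)
  have hct : ((-Complex.I) • (H τ * U τ))ᴴ = Complex.I • ((U τ)ᴴ * (H τ)ᴴ) := by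
    rw [Matrix.conjTranspose_smul, Matrix.conjTranspose_mul]
    simp
  rw [hct, matS_apply, matS_apply, hy, matVec_smulM, matVec_mul, matVec_smulM, matVec_mul,
    hy, matVec_smulV] at hD
  have hD2 : Complex.I • (matVec ((U τ)ᴴ) (matVec ((H τ)ᴴ) y)
      - matVec ((U τ)ᴴ) (matVec (H τ) y)) = 0 := by
    rw [smul_sub]
    linear_combination (norm := module) hD
  have hD3 : matVec ((U τ)ᴴ) (matVec ((H τ)ᴴ) y) - matVec ((U τ)ᴴ) (matVec (H τ) y) = 0 :=
    (smul_eq_zero.mp hD2).resolve_left Complex.I_ne_zero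
  have hD4 : matVec ((U τ)ᴴ) (matVec ((H τ)ᴴ) y) = matVec ((U τ)ᴴ) (matVec (H τ) y) :=
    sub_eq_zero.mp hD3
  have := congrArg (matVec (U τ)) hD4
  simp only [← matVec_mul, ← Matrix.mul_assoc, hUU', Matrix.one_mul] at this
  exact this


/-- Duhamel-type bound: if `U` and `U'` solve the Schrödinger equations generated by `H`
and `H'` with `U 0 = U' 0 = 1`, and `U t` is unitary for all `t`, then for every vector `ψ`
and `t ≥ 0`, `‖U t ψ − U' t ψ‖ ≤ ∫₀ᵗ ‖(H τ − H' τ) (U' τ ψ)‖ dτ`. -/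
theorem duhamel_bound {n : ℕ} (hn : 1 ≤ n)
    (H H' : ℝ → Matrix (Fin n) (Fin n) ℂ)
    (hH : Continuous H) (hH' : Continuous H')
    (U U' : ℝ → Matrix (Fin n) (Fin n) ℂ)
    (hU : ∀ t, HasDerivAt U ((-Complex.I) • (H t * U t)) t)
    (hU' : ∀ t, HasDerivAt U' ((-Complex.I) • (H' t * U' t)) t)
    (hU0 : U 0 = 1) (hU'0 : U' 0 = 1)
    (hunit : ∀ t, (U t)ᴴ * U t = 1)
    (ψ : EuclideanSpace ℂ (Fin n)) (t : ℝ) (ht : 0 ≤ t) :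
    ‖matVec (U t) ψ - matVec (U' t) ψ‖ ≤
      ∫ τ in (0:ℝ)..t, ‖matVec (H τ - H' τ) (matVec (U' τ) ψ)‖ := by
  have hUc : Continuous U := by
    rw [continuous_iff_continuousAt]; exact fun τ => (hU τ).continuousAt
  have hU'c : Continuous U' := by
    rw [continuous_iff_continuousAt]; exact fun τ => (hU' τ).continuousAt
  set z : ℝ → EuclideanSpace ℂ (Fin n) := fun τ => matVec (U' τ) ψ with hz
  set w : ℝ → EuclideanSpace ℂ (Fin n) := fun τ => matVec ((U τ)ᴴ) (z τ) with hwdef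
  set g : ℝ → EuclideanSpace ℂ (Fin n) :=
    fun τ => Complex.I • matVec ((U τ)ᴴ) (matVec (H τ - H' τ) (z τ)) with hg
  have hw : ∀ τ, HasDerivAt w (g τ) τ := by
    intro τ
    have h1 : HasDerivAt (fun s => (matS n ((U s)ᴴ)) (z s))
        ((matS n (((-Complex.I) • (H τ * U τ))ᴴ)) (z τ)
          + (matS n ((U τ)ᴴ)) (matVec ((-Complex.I) • (H' τ * U' τ)) ψ)) τ :=
      HasDerivAt.clm_apply (hasDerivAt_matS (hasDerivAt_conjT (hU τ)))
        (hasDerivAt_matVec (hU' τ) ψ)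
    have hct : ((-Complex.I) • (H τ * U τ))ᴴ = Complex.I • ((U τ)ᴴ * (H τ)ᴴ) := by
      rw [Matrix.conjTranspose_smul, Matrix.conjTranspose_mul]; simp
    have hDeq : (matS n (((-Complex.I) • (H τ * U τ))ᴴ)) (z τ)
          + (matS n ((U τ)ᴴ)) (matVec ((-Complex.I) • (H' τ * U' τ)) ψ) = g τ := by
      rw [hct, matS_apply, matS_apply, matVec_smulM, matVec_mul,
        hermitian_vec hU hunit τ (z τ), matVec_smulM, matVec_mul, matVec_smulV, hg]
      simp only [matVec_subM, matVec_subV]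
      module
    rw [hDeq] at h1
    exact h1
  have hgc : Continuous g := by
    have hzc : Continuous z := ((matS n).flip ψ).continuous.comp hU'c
    have h2 : Continuous fun τ => matVec (H τ - H' τ) (z τ) :=
      Continuous.clm_apply ((matS n).continuous.comp (hH.sub hH')) hzc
    exact (Continuous.clm_apply ((matS n).continuous.comp
      ((matC n).continuous.comp hUc)) h2).const_smul Complex.I
  have hint : ∫ τ in (0:ℝ)..t, g τ = w t - w 0 :=
    intervalIntegral.integral_eq_sub_of_hasDerivAt (fun τ _ => hw τ)
      (hgc.intervalIntegrable 0 t)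
  have hw0 : w 0 = ψ := by
    simp [hwdef, hz, hU0, hU'0, matVec_one, Matrix.conjTranspose_one]
  have hUU't : U t * (U t)ᴴ = 1 := mul_eq_one_comm.mp (hunit t)
  have hlhs : ‖matVec (U t) ψ - matVec (U' t) ψ‖ = ‖w t - w 0‖ := by
    rw [hw0]
    rw [← norm_matVec_of_unitary (A := (U t)ᴴ)
      (by rw [Matrix.conjTranspose_conjTranspose]; exact hUU't)
      (matVec (U t) ψ - matVec (U' t) ψ)]
    rw [matVec_subV, ← matVec_mul, hunit t, matVec_one, norm_sub_rev]
  have hnormg : ∀ τ, ‖g τ‖ = ‖matVec (H τ - H' τ) (matVec (U' τ) ψ)‖ := by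
    intro τ
    have hUU'τ : U τ * (U τ)ᴴ = 1 := mul_eq_one_comm.mp (hunit τ)
    rw [hg]
    simp only [norm_smul, Complex.norm_I, one_mul]
    rw [norm_matVec_of_unitary (A := (U τ)ᴴ)
      (by rw [Matrix.conjTranspose_conjTranspose]; exact hUU'τ)]
  calc ‖matVec (U t) ψ - matVec (U' t) ψ‖ = ‖∫ τ in (0:ℝ)..t, g τ‖ := by
        rw [hint, hlhs]
    _ ≤ ∫ τ in (0:ℝ)..t, ‖g τ‖ := intervalIntegral.norm_integral_le_integral_norm ht
    _ = ∫ τ in (0:ℝ)..t, ‖matVec (H τ - H' τ) (matVec (U' τ) ψ)‖ := by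
        apply intervalIntegral.integral_congr
        intro τ _
        exact hnormg τ
end

section
/- Let V > 0 be a real number, and define m = ⌈√(8 + V²)⌉, J = V/√(m² − 8), and t = 2π/J. Then the upper-right entry of the matrix exponential exp(−i·t·[[0, √2·J],[√2·J, V]]) equals 0. -/
open Matrix

/-- Off-diagonal entry of the exponential of a symmetric 2×2 complex matrix vanishes when
the two eigenvalues have equal exponentials. -/
lemma exp_sym_entry (β δ μ₁ μ₂ : ℂ) (hβ : β ≠ 0) (hne : μ₁ ≠ μ₂)
    (hsum : μ₁ + μ₂ = δ) (hprod : μ₁ * μ₂ = -β ^ 2)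
    (heq : Complex.exp μ₁ = Complex.exp μ₂) :
    (NormedSpace.exp (!![0, β; β, δ] : Matrix (Fin 2) (Fin 2) ℂ)) 0 1 = 0 := by
  have hdet : (!![β, β; μ₁, μ₂] : Matrix (Fin 2) (Fin 2) ℂ).det = β * (μ₂ - μ₁) := by
    simp [Matrix.det_fin_two_of]; ring
  have hdet0 : IsUnit (!![β, β; μ₁, μ₂] : Matrix (Fin 2) (Fin 2) ℂ).det := by
    rw [hdet]; exact (mul_ne_zero hβ (sub_ne_zero.mpr (Ne.symm hne))).isUnit
  have hPu : IsUnit (!![β, β; μ₁, μ₂] : Matrix (Fin 2) (Fin 2) ℂ) :=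
    (Matrix.isUnit_iff_isUnit_det _).mpr hdet0
  have hMP : (!![0, β; β, δ] : Matrix (Fin 2) (Fin 2) ℂ) * !![β, β; μ₁, μ₂]
      = !![β, β; μ₁, μ₂] * Matrix.diagonal ![μ₁, μ₂] := by
    ext i j
    fin_cases i <;> fin_cases j <;>
      simp [Matrix.mul_apply, Fin.sum_univ_two, Matrix.diagonal]
    case _ => linear_combination hprod - (μ₁ : ℂ) * hsum
    case _ => linear_combination hprod - (μ₂ : ℂ) * hsum
  have hM : (!![0, β; β, δ] : Matrix (Fin 2) (Fin 2) ℂ)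
      = !![β, β; μ₁, μ₂] * Matrix.diagonal ![μ₁, μ₂] * (!![β, β; μ₁, μ₂])⁻¹ := by
    rw [← hMP, Matrix.mul_nonsing_inv_cancel_right _ _ hdet0]
  rw [hM, Matrix.exp_conj _ (Matrix.diagonal ![μ₁, μ₂]) hPu, Matrix.exp_diagonal]
  have he : NormedSpace.exp (![μ₁, μ₂] : Fin 2 → ℂ) = ![Complex.exp μ₁, Complex.exp μ₂] := by
    rw [Pi.exp_def]; funext i; fin_cases i <;> simp [Complex.exp_eq_exp_ℂ]
  rw [he]
  rw [Matrix.inv_def, hdet, Matrix.adjugate_fin_two_of]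
  simp [Matrix.mul_apply, Fin.sum_univ_two, Matrix.diagonal_apply, heq, Matrix.vecHead, Matrix.vecTail, Function.comp, Matrix.vecMul_diagonal]

/-- Exact zero leakage: with `m = ⌈√(8 + V²)⌉`, `J = V/√(m² − 8)`, and `t = 2π/J`, the
upper-right entry of `exp(−i·t·[[0, √2·J],[√2·J, V]])` vanishes. -/
theorem zero_leakage (V : ℝ) (hV : 0 < V)
    (m : ℤ) (hm : m = ⌈Real.sqrt (8 + V ^ 2)⌉)
    (J t : ℝ) (hJ : J = V / Real.sqrt ((m : ℝ) ^ 2 - 8)) (ht : t = 2 * Real.pi / J) :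
    (NormedSpace.exp ((-(Complex.I * (t : ℂ))) •
        (!![0, ((Real.sqrt 2 * J : ℝ) : ℂ); ((Real.sqrt 2 * J : ℝ) : ℂ), (V : ℂ)] :
          Matrix (Fin 2) (Fin 2) ℂ))) 0 1 = 0 := by
  -- basic real facts
  have hsq : Real.sqrt (8 + V ^ 2) ^ 2 = 8 + V ^ 2 :=
    Real.sq_sqrt (by positivity)
  have hmge : Real.sqrt (8 + V ^ 2) ≤ (m : ℝ) := by rw [hm]; exact Int.le_ceil _
  have hm8 : (0:ℝ) < (m : ℝ) ^ 2 - 8 := by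
    nlinarith [Real.sqrt_nonneg (8 + V ^ 2), sq_nonneg V]
  have hs : (0:ℝ) < Real.sqrt ((m : ℝ) ^ 2 - 8) := Real.sqrt_pos.mpr hm8
  have hJ0 : 0 < J := by rw [hJ]; positivity
  have ht0 : 0 < t := by rw [ht]; positivity
  have hJ2 : J ^ 2 * ((m : ℝ) ^ 2 - 8) = V ^ 2 := by
    rw [hJ, div_pow, Real.sq_sqrt hm8.le]
    field_simp
  set Ω : ℝ := (m : ℝ) * J with hΩ
  have hm0 : (0:ℝ) < (m : ℝ) := by
    have := Real.sqrt_pos.mpr (show (0:ℝ) < 8 + V ^ 2 by positivity)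
    linarith
  have hΩ0 : 0 < Ω := mul_pos hm0 hJ0
  have hΩ2 : Ω ^ 2 = V ^ 2 + 8 * J ^ 2 := by
    rw [hΩ]; nlinarith [hJ2]
  set μ₁ : ℂ := -(Complex.I * (t : ℂ)) * (((V - Ω) / 2 : ℝ) : ℂ) with hμ₁
  set μ₂ : ℂ := -(Complex.I * (t : ℂ)) * (((V + Ω) / 2 : ℝ) : ℂ) with hμ₂
  have hMeq : (-(Complex.I * (t : ℂ))) •
      (!![0, ((Real.sqrt 2 * J : ℝ) : ℂ); ((Real.sqrt 2 * J : ℝ) : ℂ), (V : ℂ)] :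
        Matrix (Fin 2) (Fin 2) ℂ)
      = !![0, -(Complex.I * (t : ℂ)) * ((Real.sqrt 2 * J : ℝ) : ℂ);
           -(Complex.I * (t : ℂ)) * ((Real.sqrt 2 * J : ℝ) : ℂ),
           -(Complex.I * (t : ℂ)) * (V : ℂ)] := by
    ext i j; fin_cases i <;> fin_cases j <;> simp
  rw [hMeq]
  apply exp_sym_entry _ _ μ₁ μ₂
  · -- β ≠ 0
    apply mul_ne_zero
    · simp [Complex.ext_iff, ht0.ne']
    · rw [Complex.ofReal_ne_zero]
      positivity
  · -- μ₁ ≠ μ₂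
    rw [hμ₁, hμ₂]
    intro h
    have h2 : (((V - Ω) / 2 : ℝ) : ℂ) = (((V + Ω) / 2 : ℝ) : ℂ) := by
      have hne0 : -(Complex.I * (t : ℂ)) ≠ 0 := by simp [Complex.ext_iff, ht0.ne']
      exact mul_left_cancel₀ hne0 h
    rw [Complex.ofReal_inj] at h2
    nlinarith
  · -- sum
    rw [hμ₁, hμ₂]; push_cast; ring
  · -- product
    rw [hμ₁, hμ₂]
    have h2 : (Real.sqrt 2) ^ 2 = 2 := Real.sq_sqrt (by norm_num)
    have hreal : ((V - Ω) / 2) * ((V + Ω) / 2) = -((Real.sqrt 2 * J) ^ 2) := by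
      nlinarith [hΩ2]
    have hrealC : ((((V - Ω) / 2 : ℝ)) : ℂ) * ((((V + Ω) / 2 : ℝ)) : ℂ)
        = -(((Real.sqrt 2 * J : ℝ) : ℂ)) ^ 2 := by
      have hc := congrArg (fun x : ℝ => (x : ℂ)) hreal
      push_cast at hc ⊢
      linear_combination hc
    have hI : Complex.I ^ 2 = -1 := Complex.I_sq
    linear_combination (Complex.I * (t:ℂ))^2 * hrealC
  · -- exp equality
    have htJ : t * J = 2 * Real.pi := by
      rw [ht]; field_simp
    have hdiff : μ₂ - μ₁ = ((-m : ℤ) : ℂ) * (2 * Real.pi * Complex.I) := by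
      rw [hμ₁, hμ₂]
      have : t * Ω = 2 * Real.pi * (m : ℝ) := by
        rw [hΩ]; nlinarith [htJ]
      have hC : ((t : ℝ) : ℂ) * ((Ω : ℝ) : ℂ) = 2 * (Real.pi : ℂ) * ((m : ℝ) : ℂ) := by
        have hc := congrArg (fun x : ℝ => (x : ℂ)) this
        push_cast at hc ⊢
        linear_combination hc
      push_cast at hC ⊢
      linear_combination -Complex.I * hC
    have : μ₂ = μ₁ + ((-m : ℤ) : ℂ) * (2 * Real.pi * Complex.I) := by
      linear_combination hdiff
    rw [this, Complex.exp_add, Complex.exp_int_mul_two_pi_mul_I, mul_one]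
end

section
/- Let J, V ∈ ℝ with V > 0. Then for every t ∈ ℝ, the squared modulus of the upper-right entry of the matrix exponential exp(−i·t·[[0, √2·J],[√2·J, V]]) is at most 8J²/(8J² + V²); in particular it is at most 8J²/V². -/
open Matrix NormedSpace
set_option maxHeartbeats 1000000

lemma entry01 (a b p q x y c s u v w : ℂ) :
    ((!![a, b; p, q] : Matrix (Fin 2) (Fin 2) ℂ) * Matrix.diagonal ![x, y] *
      (c • !![s, u; v, w])) 0 1 = a * x * (c * u) + b * y * (c * w) := by
  simp [Matrix.mul_apply, Fin.sum_univ_two, Matrix.diagonal_apply, Matrix.smul_apply,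
    Matrix.vecMul, dotProduct, Matrix.vecHead, Matrix.vecTail]

lemma key_bound (J V : ℝ) (hV : 0 < V) (t : ℝ) :
    ‖(NormedSpace.exp ((-(Complex.I * (t : ℂ))) •
        (!![0, ((Real.sqrt 2 * J : ℝ) : ℂ); ((Real.sqrt 2 * J : ℝ) : ℂ), (V : ℂ)] :
          Matrix (Fin 2) (Fin 2) ℂ))) 0 1‖ ^ 2 ≤ 8 * J ^ 2 / (8 * J ^ 2 + V ^ 2) := by
  by_cases hJ : J = 0
  · subst hJ
    have hm : (!![0, ((Real.sqrt 2 * 0 : ℝ) : ℂ); ((Real.sqrt 2 * 0 : ℝ) : ℂ), (V : ℂ)] :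
        Matrix (Fin 2) (Fin 2) ℂ) = Matrix.diagonal ![0, (V:ℂ)] := by
      ext i j
      fin_cases i <;> fin_cases j <;> simp [Matrix.diagonal]
    rw [hm, ← Matrix.diagonal_smul, Matrix.exp_diagonal]
    simp
    try positivity
  -- main case
  obtain ⟨g, hgdef⟩ : ∃ g : ℝ, g = Real.sqrt 2 * J := ⟨_, rfl⟩
  rw [← hgdef]
  have hg : g ≠ 0 := hgdef ▸ mul_ne_zero (by positivity) hJ
  have hg2 : g ^ 2 = 2 * J ^ 2 := by
    rw [hgdef, mul_pow, Real.sq_sqrt (by norm_num : (2:ℝ) ≥ 0)]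
  obtain ⟨Δ, hΔdef⟩ : ∃ d : ℝ, d = Real.sqrt (V ^ 2 + 4 * g ^ 2) := ⟨_, rfl⟩
  have hΔsq : Δ ^ 2 = V ^ 2 + 4 * g ^ 2 := hΔdef ▸ Real.sq_sqrt (by positivity)
  have hΔpos : 0 < Δ := hΔdef ▸ Real.sqrt_pos.mpr (by positivity)
  obtain ⟨l1, hl1⟩ : ∃ x : ℝ, x = (V - Δ) / 2 := ⟨_, rfl⟩
  obtain ⟨l2, hl2⟩ : ∃ x : ℝ, x = (V + Δ) / 2 := ⟨_, rfl⟩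
  have hsq1 : l1 ^ 2 = V * l1 + g ^ 2 := by rw [hl1]; nlinarith [hΔsq]
  have hsq2 : l2 ^ 2 = V * l2 + g ^ 2 := by rw [hl2]; nlinarith [hΔsq]
  have hdiff : l2 - l1 = Δ := by rw [hl1, hl2]; ring
  obtain ⟨U, hU⟩ : ∃ M : Matrix (Fin 2) (Fin 2) ℂ, M = !![(g:ℂ), (g:ℂ); (l1:ℂ), (l2:ℂ)] := ⟨_, rfl⟩
  obtain ⟨W, hW⟩ : ∃ M : Matrix (Fin 2) (Fin 2) ℂ,
      M = ((g * Δ : ℝ) : ℂ)⁻¹ • !![(l2:ℂ), -(g:ℂ); -(l1:ℂ), (g:ℂ)] := ⟨_, rfl⟩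
  have hc : ((g * Δ : ℝ) : ℂ) ≠ 0 := by
    exact_mod_cast mul_ne_zero hg (ne_of_gt hΔpos)
  have hUW : U * W = 1 := by
    ext i j
    fin_cases i <;> fin_cases j <;>
      simp [hU, hW, Matrix.mul_apply, Fin.sum_univ_two, Matrix.smul_apply, Matrix.one_apply] <;>
      field_simp <;> norm_cast <;>
      first
        | (left; ring)
        | (rw [div_eq_one_iff_eq (mul_ne_zero (ne_of_gt hΔpos) hg)]; linear_combination g * hdiff)
        | (rw [div_eq_one_iff_eq (mul_ne_zero hg (ne_of_gt hΔpos))]; linear_combination g * hdiff)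
        | (norm_num)
  have hInv : U⁻¹ = W := Matrix.inv_eq_right_inv hUW
  have hdet : U.det * W.det = 1 := by rw [← Matrix.det_mul, hUW, Matrix.det_one]
  have hUnit : IsUnit U := (Matrix.isUnit_iff_isUnit_det U).mpr (IsUnit.of_mul_eq_one _ hdet)
  obtain ⟨D, hD⟩ : ∃ M : Matrix (Fin 2) (Fin 2) ℂ, M = Matrix.diagonal ![(l1:ℂ), (l2:ℂ)] := ⟨_, rfl⟩
  have hHU : (!![0, (g:ℂ); (g:ℂ), (V:ℂ)] : Matrix (Fin 2) (Fin 2) ℂ) * U = U * D := by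
    ext i j
    fin_cases i <;> fin_cases j <;>
      simp [hU, hD, Matrix.mul_apply, Fin.sum_univ_two, Matrix.diagonal_apply] <;>
      norm_cast <;> nlinarith [hsq1, hsq2]
  have hH : (!![0, (g:ℂ); (g:ℂ), (V:ℂ)] : Matrix (Fin 2) (Fin 2) ℂ) = U * D * U⁻¹ := by
    rw [hInv]
    calc (!![0, (g:ℂ); (g:ℂ), (V:ℂ)] : Matrix (Fin 2) (Fin 2) ℂ)
        = !![0, (g:ℂ); (g:ℂ), (V:ℂ)] * (U * W) := by rw [hUW, mul_one]
      _ = (!![0, (g:ℂ); (g:ℂ), (V:ℂ)] * U) * W := by rw [mul_assoc]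
      _ = U * D * W := by rw [hHU]
  have hD' : (Matrix.diagonal (fun i => (-(Complex.I * (t : ℂ))) * (![(l1:ℂ), (l2:ℂ)] i)) :
      Matrix (Fin 2) (Fin 2) ℂ) = (-(Complex.I * (t : ℂ))) • D := by
    rw [hD, ← Matrix.diagonal_smul]
    congr 1
  have hsmul : (-(Complex.I * (t : ℂ))) • (!![0, (g:ℂ); (g:ℂ), (V:ℂ)] : Matrix (Fin 2) (Fin 2) ℂ)
      = U * Matrix.diagonal (fun i => (-(Complex.I * (t : ℂ))) * (![(l1:ℂ), (l2:ℂ)] i)) * U⁻¹ := by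
    rw [hH, hD', Matrix.mul_smul, Matrix.smul_mul]
  obtain ⟨e1, he1⟩ : ∃ z : ℂ, z = NormedSpace.exp ((-(Complex.I * (t : ℂ))) * (l1:ℂ)) := ⟨_, rfl⟩
  obtain ⟨e2, he2⟩ : ∃ z : ℂ, z = NormedSpace.exp ((-(Complex.I * (t : ℂ))) * (l2:ℂ)) := ⟨_, rfl⟩
  have hexp : NormedSpace.exp ((-(Complex.I * (t : ℂ))) •
      (!![0, (g:ℂ); (g:ℂ), (V:ℂ)] : Matrix (Fin 2) (Fin 2) ℂ))
      = U * Matrix.diagonal ![e1, e2] * U⁻¹ := by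
    have hfun : (fun i => NormedSpace.exp ((-(Complex.I * (t:ℂ))) * (![(l1:ℂ),(l2:ℂ)] i)))
        = ![e1, e2] := by
      funext i
      fin_cases i <;> simp [he1, he2]
    rw [hsmul, Matrix.exp_conj U _ hUnit, Matrix.exp_diagonal, Pi.exp_def, hfun]
  have habs1 : ‖e1‖ = 1 := by
    rw [he1, ← Complex.exp_eq_exp_ℂ, Complex.norm_exp]
    simp [Complex.mul_re]
  have habs2 : ‖e2‖ = 1 := by
    rw [he2, ← Complex.exp_eq_exp_ℂ, Complex.norm_exp]
    simp [Complex.mul_re]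
  have hentry : (NormedSpace.exp ((-(Complex.I * (t : ℂ))) •
      (!![0, (g:ℂ); (g:ℂ), (V:ℂ)] : Matrix (Fin 2) (Fin 2) ℂ))) 0 1
      = ((g^2 / (g * Δ) : ℝ) : ℂ) * (e2 - e1) := by
    rw [hexp, hInv, hU, hW, entry01]
    push_cast
    field_simp
    ring
  have hg2' : (0:ℝ) < g^2 := by positivity
  have habsentry : ‖(NormedSpace.exp ((-(Complex.I * (t : ℂ))) •
      (!![0, (g:ℂ); (g:ℂ), (V:ℂ)] : Matrix (Fin 2) (Fin 2) ℂ))) 0 1‖ ≤ 2 * g^2 / (|g| * Δ) := by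
    rw [hentry, norm_mul, Complex.norm_real, Real.norm_eq_abs]
    have h1 : ‖e2 - e1‖ ≤ 2 := by
      calc ‖e2 - e1‖ = ‖e2 - e1‖ := rfl
        _ ≤ ‖e2‖ + ‖e1‖ := norm_sub_le _ _
        _ = 2 := by
            rw [habs1, habs2]; norm_num
    have h2 : |g^2 / (g * Δ)| = g^2 / (|g| * Δ) := by
      rw [abs_div, abs_mul, abs_of_pos hg2', abs_of_pos hΔpos]
    rw [h2]
    calc g^2 / (|g| * Δ) * ‖e2 - e1‖ ≤ g^2 / (|g| * Δ) * 2 := by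
          apply mul_le_mul_of_nonneg_left h1 (by positivity)
      _ = 2 * g^2 / (|g| * Δ) := by ring
  have hfin : (2 * g^2 / (|g| * Δ))^2 = 4 * g^2 / (V^2 + 4*g^2) := by
    have h1 : (|g| * Δ)^2 = g^2 * (V^2 + 4*g^2) := by rw [mul_pow, sq_abs, hΔsq]
    rw [div_pow, h1, div_eq_div_iff (ne_of_gt (mul_pos hg2' (by positivity)))
      (ne_of_gt (by positivity : (0:ℝ) < V^2 + 4*g^2))]
    ring
  calc ‖(NormedSpace.exp ((-(Complex.I * (t : ℂ))) •
      (!![0, (g:ℂ); (g:ℂ), (V:ℂ)] : Matrix (Fin 2) (Fin 2) ℂ))) 0 1‖ ^ 2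
      ≤ (2 * g^2 / (|g| * Δ))^2 := by
        apply pow_le_pow_left₀ (norm_nonneg _) habsentry
    _ = 4 * g^2 / (V^2 + 4*g^2) := hfin
    _ = 8 * J ^ 2 / (8 * J ^ 2 + V ^ 2) := by rw [hg2]; ring_nf

/-- Leakage suppression: for any `t`, the squared modulus of the upper-right entry of
`exp(−i·t·[[0, √2·J],[√2·J, V]])` is at most `8J²/(8J² + V²)`, in particular at most
`8J²/V²`. -/
theorem leakage_suppression (J V : ℝ) (hV : 0 < V) (t : ℝ) :
    ‖(NormedSpace.exp ((-(Complex.I * (t : ℂ))) •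
        (!![0, ((Real.sqrt 2 * J : ℝ) : ℂ); ((Real.sqrt 2 * J : ℝ) : ℂ), (V : ℂ)] :
          Matrix (Fin 2) (Fin 2) ℂ))) 0 1‖ ^ 2 ≤ 8 * J ^ 2 / (8 * J ^ 2 + V ^ 2) ∧
    ‖(NormedSpace.exp ((-(Complex.I * (t : ℂ))) •
        (!![0, ((Real.sqrt 2 * J : ℝ) : ℂ); ((Real.sqrt 2 * J : ℝ) : ℂ), (V : ℂ)] :
          Matrix (Fin 2) (Fin 2) ℂ))) 0 1‖ ^ 2 ≤ 8 * J ^ 2 / V ^ 2 := by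
  have h := key_bound J V hV t
  refine ⟨h, h.trans ?_⟩
  apply div_le_div_of_nonneg_left (by positivity) (by positivity)
  nlinarith [sq_nonneg J]
end
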